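/- If each of k variable gadgets can be 'claimed' by whichever player moves in it first, and apart from these gadgets the players' moves do not interact, then in optimal play of the combined game the variables are claimed according to an alternating choice process: the set of outcomes (partitions of variables into White-claimed and Black-claimed) achievable under optimal play from both sides is the same as in the game where players strictly alternate choosing variables. -/
import Mathlib


variable {V : Type} [Fintype V] [DecidableEq V]

/-- The strictly-alternating variable-claiming game: `T` is the set of variables
claimed by White, `Fl` by Black, `turn = true` means White to move, `n` is the
number of unclaimed variables; when all variables are claimed White wins iff
the win predicate `Win` holds of his claimed set. -/
def whiteWinsAlt (Win : Finset V → Prop) : ℕ → Bool → Finset V → Finset V → Prop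
  | 0, _, T, _ => Win T
  | n + 1, true, T, Fl => ∃ v, v ∉ T ∪ Fl ∧ whiteWinsAlt Win n false (insert v T) Fl
  | n + 1, false, T, Fl => ∀ v, v ∉ T ∪ Fl → whiteWinsAlt Win n true T (insert v Fl)

/-- The claiming game in which either player may, on his turn, make a 'null'
move (pass) instead of claiming a variable, with at most `k` null moves in
total (so the game terminates). -/
def whiteWinsPass (Win : Finset V → Prop) : ℕ → ℕ → Bool → Finset V → Finset V → Prop
  | 0, _, _, T, _ => Win T
  | n + 1, 0, true, T, Fl =>
      ∃ v, v ∉ T ∪ Fl ∧ whiteWinsPass Win n 0 false (insert v T) Fl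
  | n + 1, k + 1, true, T, Fl =>
      (∃ v, v ∉ T ∪ Fl ∧ whiteWinsPass Win n (k + 1) false (insert v T) Fl) ∨
      whiteWinsPass Win (n + 1) k false T Fl
  | n + 1, 0, false, T, Fl =>
      ∀ v, v ∉ T ∪ Fl → whiteWinsPass Win n 0 true T (insert v Fl)
  | n + 1, k + 1, false, T, Fl =>
      (∀ v, v ∉ T ∪ Fl → whiteWinsPass Win n (k + 1) true T (insert v Fl)) ∧
      whiteWinsPass Win (n + 1) k true T Fl
termination_by n k => n + k
decreasing_by all_goals omega

lemma card_compl_insert_aux {n : ℕ} {v : V} {S : Finset V} (hv : v ∉ S)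
    (h : Sᶜ.card = n + 1) : (insert v S)ᶜ.card = n := by
  rw [Finset.compl_insert, Finset.card_erase_of_mem (Finset.mem_compl.2 hv), h]; rfl

lemma exists_unclaimed {n : ℕ} {S : Finset V} (h : Sᶜ.card = n + 1) : ∃ v, v ∉ S := by
  have : Sᶜ.Nonempty := Finset.card_pos.1 (by omega)
  obtain ⟨v, hv⟩ := this
  exact ⟨v, Finset.mem_compl.1 hv⟩

/-- Key lemma: an extra White stone never hurts White. -/
lemma alt_extra_stone (Win : Finset V → Prop)
    (hWin : ∀ S S' : Finset V, S ⊆ S' → Win S → Win S') :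
    ∀ n : ℕ, ∀ (b : Bool) (T Fl : Finset V) (v : V), v ∉ T ∪ Fl →
      (T ∪ Fl)ᶜ.card = n + 1 → whiteWinsAlt Win (n + 1) b T Fl →
      whiteWinsAlt Win n b (insert v T) Fl := by
  intro n
  induction n using Nat.strong_induction_on with
  | _ n ih =>
    intro b T Fl v hv hc h
    cases b with
    | true =>
      obtain ⟨w, hw, hw2⟩ := h
      cases n with
      | zero =>
        -- goal : Win (insert v T); from card 1, w = v
        have hvmem : v ∈ (T ∪ Fl)ᶜ := Finset.mem_compl.2 hv
        have hwmem : w ∈ (T ∪ Fl)ᶜ := Finset.mem_compl.2 hw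
        obtain ⟨a, ha⟩ := Finset.card_eq_one.1 hc
        rw [ha, Finset.mem_singleton] at hvmem hwmem
        subst hvmem; subst hwmem
        exact hw2
      | succ m =>
        by_cases hwv : w = v
        · subst hwv
          -- hw2 : alt (m+1) false (insert w T) Fl ; goal : alt (m+1) true (insert w T) Fl
          have hc' : ((insert w T ∪ Fl)ᶜ).card = m + 1 := by
            rw [Finset.insert_union]; exact card_compl_insert_aux hw hc
          obtain ⟨u, hu⟩ := exists_unclaimed hc'
          exact ⟨u, hu, ih m (by omega) false (insert w T) Fl u hu hc' hw2⟩
        · refine ⟨w, ?_, ?_⟩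
          · simp only [Finset.mem_union, Finset.mem_insert] at hw ⊢
            push_neg at hw ⊢
            exact ⟨⟨Ne.symm (fun h => hwv h.symm), hw.1⟩, hw.2⟩
          · have hv' : v ∉ insert w T ∪ Fl := by
              simp only [Finset.mem_union, Finset.mem_insert] at hv ⊢
              push_neg at hv ⊢
              exact ⟨⟨fun h => hwv h.symm, hv.1⟩, hv.2⟩
            have hc' : ((insert w T ∪ Fl)ᶜ).card = m + 1 := by
              rw [Finset.insert_union]; exact card_compl_insert_aux hw hc
            have := ih m (by omega) false (insert w T) Fl v hv' hc' hw2
            rwa [Finset.insert_comm] at this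
    | false =>
      cases n with
      | zero =>
        -- h : ∀ u ∉ T ∪ Fl, Win T ; goal : Win (insert v T)
        exact hWin T (insert v T) (Finset.subset_insert v T) (h v hv)
      | succ m =>
        intro u hu
        have huv : u ≠ v := by
          intro h'; subst h'
          exact hu (Finset.mem_union_left _ (Finset.mem_insert_self u T))
        have hu' : u ∉ T ∪ Fl := by
          simp only [Finset.mem_union, Finset.mem_insert] at hu ⊢
          push_neg at hu ⊢
          exact ⟨hu.1.2, hu.2⟩
        have hv' : v ∉ T ∪ insert u Fl := by
          simp only [Finset.mem_union, Finset.mem_insert] at hv ⊢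
          push_neg at hv ⊢
          exact ⟨hv.1, fun h => huv h.symm, hv.2⟩
        have hc' : ((T ∪ insert u Fl)ᶜ).card = m + 1 := by
          rw [Finset.union_insert]; exact card_compl_insert_aux hu' hc
        exact ih m (by omega) true T (insert u Fl) v hv' hc' (h u hu')

/-- Having the move never hurts White. -/
lemma alt_gift (Win : Finset V → Prop)
    (hWin : ∀ S S' : Finset V, S ⊆ S' → Win S → Win S') (n : ℕ) (T Fl : Finset V)
    (hc : (T ∪ Fl)ᶜ.card = n) (h : whiteWinsAlt Win n false T Fl) :
    whiteWinsAlt Win n true T Fl := by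
  cases n with
  | zero => exact h
  | succ m =>
    obtain ⟨v, hv⟩ := exists_unclaimed hc
    exact ⟨v, hv, alt_extra_stone Win hWin m false T Fl v hv hc h⟩

lemma pass_iff_alt_aux (Win : Finset V → Prop)
    (hWin : ∀ S S' : Finset V, S ⊆ S' → Win S → Win S') :
    ∀ m n k : ℕ, ∀ (b : Bool) (T Fl : Finset V), n + k ≤ m →
      (T ∪ Fl)ᶜ.card = n →
      (whiteWinsPass Win n k b T Fl ↔ whiteWinsAlt Win n b T Fl) := by
  intro m
  induction m with
  | zero =>
    intro n k b T Fl hle hc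
    have hn : n = 0 := by omega
    subst hn
    simp only [whiteWinsPass, whiteWinsAlt]
  | succ m ih =>
    intro n k b T Fl hle hc
    cases n with
    | zero => simp only [whiteWinsPass, whiteWinsAlt]
    | succ n =>
      have step : ∀ (v : V), v ∉ T ∪ Fl → ((insert v T ∪ Fl)ᶜ).card = n := by
        intro v hv; rw [Finset.insert_union]; exact card_compl_insert_aux hv hc
      have stepF : ∀ (v : V), v ∉ T ∪ Fl → ((T ∪ insert v Fl)ᶜ).card = n := by
        intro v hv; rw [Finset.union_insert]; exact card_compl_insert_aux hv hc
      cases k with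
      | zero =>
        cases b with
        | true =>
          simp only [whiteWinsPass, whiteWinsAlt]
          exact exists_congr fun v => and_congr_right fun hv =>
            ih n 0 false (insert v T) Fl (by omega) (step v hv)
        | false =>
          simp only [whiteWinsPass, whiteWinsAlt]
          exact forall_congr' fun v => imp_congr_right fun hv =>
            ih n 0 true T (insert v Fl) (by omega) (stepF v hv)
      | succ k =>
        cases b with
        | true =>
          rw [whiteWinsPass]
          show (∃ v, v ∉ T ∪ Fl ∧ whiteWinsPass Win n (k+1) false (insert v T) Fl) ∨
              whiteWinsPass Win (n+1) k false T Fl ↔ _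
          constructor
          · rintro (⟨v, hv, h⟩ | h)
            · exact ⟨v, hv, (ih n (k+1) false (insert v T) Fl (by omega) (step v hv)).1 h⟩
            · have := (ih (n+1) k false T Fl (by omega) hc).1 h
              exact alt_gift Win hWin (n+1) T Fl hc this
          · rintro ⟨v, hv, h⟩
            exact Or.inl ⟨v, hv, (ih n (k+1) false (insert v T) Fl (by omega) (step v hv)).2 h⟩
        | false =>
          rw [whiteWinsPass]
          show (∀ v, v ∉ T ∪ Fl → whiteWinsPass Win n (k+1) true T (insert v Fl)) ∧
              whiteWinsPass Win (n+1) k true T Fl ↔ _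
          constructor
          · rintro ⟨h1, _⟩ v hv
            exact (ih n (k+1) true T (insert v Fl) (by omega) (stepF v hv)).1 (h1 v hv)
          · intro h
            refine ⟨fun v hv =>
              (ih n (k+1) true T (insert v Fl) (by omega) (stepF v hv)).2 (h v hv), ?_⟩
            have : whiteWinsAlt Win (n+1) false T Fl := h
            exact (ih (n+1) k true T Fl (by omega) hc).2
              (alt_gift Win hWin (n+1) T Fl hc this)

/-- For a monotone win predicate (White prefers larger claimed
sets), allowing null moves changes nothing: White has a winning strategy in the
claiming game with (boundedly many) null moves iff he has one in the
strictly-alternating no-pass variable-choosing game. -/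
theorem whiteWins_pass_iff_alt (Win : Finset V → Prop)
    (hWin : ∀ S S' : Finset V, S ⊆ S' → Win S → Win S')
    (n : ℕ) (hn : n = Fintype.card V) (k : ℕ) :
    whiteWinsPass Win n k true (∅ : Finset V) ∅ ↔
      whiteWinsAlt Win n true (∅ : Finset V) ∅ := by
  apply pass_iff_alt_aux Win hWin (n + k) n k true ∅ ∅ le_rfl
  simp [hn]
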